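/- Let x solve b(x,y)=ℓ(y) for all y∈Y. Then x_h ∈ X_h solves the ideal PG method with optimal test space T(X_h) if and only if x_h minimizes the residual in the dual norm: x_h = argmin_{z_h∈X_h} ‖ℓ − Bz_h‖_{Y*}, where B : X → Y* is defined by (Bx)(y) = b(x,y). -/

import Mathlib

/-!
The trial-to-test operator `T` is the Riesz representative of `B`, so `‖B z‖_{Y*} = ‖T z‖_Y`
and, with `ℓ = B x`, the dual residual norm `‖ℓ - B z_h‖` is the distance from `T x` to
`T z_h` in `Y`. Minimising it over `X_h` is thus best approximation of `T x` from the subspace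
`T(X_h)`, which is characterised by orthogonality of `T x - T x_h` to `T(X_h)`; by the Riesz
relation once more, that orthogonality is the Petrov–Galerkin equation with test space `T(X_h)`.
-/

open scoped InnerProductSpace

theorem norm_innerSLFlip_apply {𝕜 E : Type*} [RCLike 𝕜] [NormedAddCommGroup E]
    [InnerProductSpace 𝕜 E] (v : E) : ‖innerSLFlip 𝕜 v‖ = ‖v‖ := by
  have h : ∀ y, ‖innerSLFlip 𝕜 v y‖ = ‖innerSL 𝕜 v y‖ := fun y => norm_inner_symm y v
  rw [← innerSL_apply_norm 𝕜 v]
  refine le_antisymm ?_ ?_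
  · exact (innerSLFlip 𝕜 v).opNorm_le_bound (norm_nonneg _) fun y =>
      (h y).trans_le ((innerSL 𝕜 v).le_opNorm y)
  · exact (innerSL 𝕜 v).opNorm_le_bound (norm_nonneg _) fun y =>
      (h y).symm.trans_le ((innerSLFlip 𝕜 v).le_opNorm y)

section TrialToTest

variable {𝕜 X Y : Type*} [RCLike 𝕜] [NormedAddCommGroup X] [NormedSpace 𝕜 X]
  [NormedAddCommGroup Y] [InnerProductSpace 𝕜 Y] {b : X →L[𝕜] Y →L⋆[𝕜] 𝕜} {T : X → Y}

theorem eq_innerSLFlip_of_inner_eq (hT : ∀ z y, ⟪y, T z⟫_𝕜 = b z y) (z : X) :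
    b z = innerSLFlip 𝕜 (T z) :=
  ContinuousLinearMap.ext fun y => (hT z y).symm

/-- The trial-to-test operator `T = R_Y⁻¹ ∘ B`, which is linear because `B` is. -/
def trialToTest (hT : ∀ z y, ⟪y, T z⟫_𝕜 = b z y) : X →ₗ[𝕜] Y where
  toFun := T
  map_add' z w := ext_inner_left 𝕜 fun y => by
    rw [hT, inner_add_right, hT, hT, map_add, add_apply]
  map_smul' c z := ext_inner_left 𝕜 fun y => by
    rw [hT, RingHom.id_apply, inner_smul_right, hT, map_smul, smul_apply,
      smul_eq_mul]

theorem map_sub_of_inner_eq (hT : ∀ z y, ⟪y, T z⟫_𝕜 = b z y) (x z : X) :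
    T (x - z) = T x - T z :=
  map_sub (trialToTest hT) x z

theorem norm_apply_eq_norm_of_inner_eq (hT : ∀ z y, ⟪y, T z⟫_𝕜 = b z y) (z : X) :
    ‖b z‖ = ‖T z‖ := by
  rw [eq_innerSLFlip_of_inner_eq hT, norm_innerSLFlip_apply]

theorem norm_sub_apply_eq_norm_sub_of_inner_eq (hT : ∀ z y, ⟪y, T z⟫_𝕜 = b z y) (x z : X) :
    ‖b x - b z‖ = ‖T x - T z‖ := by
  rw [← map_sub, norm_apply_eq_norm_of_inner_eq hT, map_sub_of_inner_eq hT]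

theorem inner_sub_eq_zero_iff_of_inner_eq (hT : ∀ z y, ⟪y, T z⟫_𝕜 = b z y) (x xh z : X) :
    ⟪T x - T xh, T z⟫_𝕜 = 0 ↔ b xh (T z) = b x (T z) := by
  rw [← map_sub_of_inner_eq hT, ← inner_conj_symm, map_eq_zero, hT, map_sub, sub_apply,
    sub_eq_zero, eq_comm]

theorem forall_apply_eq_iff_norm_sub_eq_iInf (hT : ∀ z y, ⟪y, T z⟫_𝕜 = b z y)
    (Xh : Submodule 𝕜 X) {x xh : X} (hxh : xh ∈ Xh) :
    (∀ z ∈ Xh, b xh (T z) = b x (T z)) ↔ ‖b x - b xh‖ = ⨅ zh : Xh, ‖b x - b zh‖ := by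
  let Tl := trialToTest hT
  have hinf : ⨅ zh : Xh, ‖T x - T zh‖ = ⨅ w : Xh.map Tl, ‖T x - w‖ :=
    (Tl.submoduleMap_surjective Xh).iInf_comp fun w => ‖T x - w‖
  rw [norm_sub_apply_eq_norm_sub_of_inner_eq hT, iInf_congr fun zh : Xh =>
    norm_sub_apply_eq_norm_sub_of_inner_eq hT x zh, hinf,
    Submodule.norm_eq_iInf_iff_inner_eq_zero (u := T x) (v := T xh) (Xh.map Tl)
      (Submodule.mem_map_of_mem hxh)]
  simp only [Submodule.mem_map, forall_exists_index, and_imp, forall_apply_eq_imp_iff₂]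
  exact forall₂_congr fun z _ => (inner_sub_eq_zero_iff_of_inner_eq hT x xh z).symm

end TrialToTest

theorem stmt_8_general
    {X Y : Type*} [NormedAddCommGroup X] [InnerProductSpace ℂ X]
    [NormedAddCommGroup Y] [InnerProductSpace ℂ Y]
    (b : X →L[ℂ] Y →L⋆[ℂ] ℂ) (T : X → Y)
    (hT : ∀ z y, (inner ℂ y (T z) : ℂ) = b z y)
    (Xh : Submodule ℂ X)
    (ℓ : Y →L⋆[ℂ] ℂ) (x : X) (hx : ∀ y : Y, b x y = ℓ y)
    (xh : X) (hxh : xh ∈ Xh) :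
    (∀ z ∈ Xh, b xh (T z) = ℓ (T z)) ↔
      ‖ℓ - b xh‖ = ⨅ zh : Xh, ‖ℓ - b (zh : X)‖ := by
  obtain rfl : b x = ℓ := ContinuousLinearMap.ext hx
  exact forall_apply_eq_iff_norm_sub_eq_iInf hT Xh hxh

/-- Let `x` solve `b(x,y) = ℓ(y)` for all `y ∈ Y`. Then `x_h ∈ X_h` solves the ideal PG
method with optimal test space `T(X_h)` if and only if `x_h` minimizes the residual in the
dual norm: `‖ℓ − B x_h‖_{Y*} = inf_{z_h ∈ X_h} ‖ℓ − B z_h‖_{Y*}`, where `B z = b(z,·)`. -/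
theorem stmt_8
    {X Y : Type*} [NormedAddCommGroup X] [InnerProductSpace ℂ X] [CompleteSpace X]
    [NormedAddCommGroup Y] [InnerProductSpace ℂ Y] [CompleteSpace Y]
    (b : X →L[ℂ] Y →L⋆[ℂ] ℂ) (T : X → Y)
    (hT : ∀ z y, (inner ℂ y (T z) : ℂ) = b z y)
    (C₁ C₂ : ℝ) (hC₁ : 0 < C₁) (hC₂ : 0 < C₂)
    (huniq : ∀ z : X, (∀ y : Y, b z y = 0) → z = 0)
    (hlow : ∀ y : Y, C₁ * ‖y‖ ≤ ⨆ z : X, ‖b z y‖ / ‖z‖)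
    (hcont : ∀ (z : X) (y : Y), ‖b z y‖ ≤ C₂ * ‖z‖ * ‖y‖)
    (Xh : Submodule ℂ X) (hXh : FiniteDimensional ℂ Xh)
    (ℓ : Y →L⋆[ℂ] ℂ) (x : X) (hx : ∀ y : Y, b x y = ℓ y)
    (xh : X) (hxh : xh ∈ Xh) :
    (∀ z ∈ Xh, b xh (T z) = ℓ (T z)) ↔
      ‖ℓ - b xh‖ = ⨅ zh : Xh, ‖ℓ - b (zh : X)‖ :=
  stmt_8_general b T hT Xh ℓ x hx xh hxh
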